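/- arXiv:2506.15416 — 2 statements merged into one kernel-verified Lean document; each statement's English description precedes it below -/
import Mathlib

section
/- For a spherical triangle with sides a, b, c and opposite angles A, B, C, the Euclidean-like law of cosines holds: ((cos b + cos c)/(1 + cos a)) * (sin a)^2 = ((cos c + cos a)/(1 + cos b)) * (sin b)^2 + ((cos a + cos b)/(1 + cos c)) * (sin c)^2 - 2 * sin b * sin c * cos A. -/
/-! Since `sin² x = (1 - cos x)(1 + cos x)`, each coefficient `(p / (1 + cos x)) * sin² x` equals
`p * (1 - cos x)`, so the identity becomes a polynomial identity in `cos a, cos b, cos c` and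
`sin b sin c cos A`, which holds once the latter is replaced by `cos a - cos b cos c`. -/

open Real

lemma Real.neg_one_lt_cos_of_mem_Ioo {x : ℝ} (hx : x ∈ Set.Ioo 0 π) : -1 < cos x := by
  simpa using cos_lt_cos_of_nonneg_of_le_pi hx.1.le le_rfl hx.2

lemma Real.div_one_add_cos_mul_sin_sq {x : ℝ} (hx : -1 < cos x) (p : ℝ) :
    p / (1 + cos x) * sin x ^ 2 = p * (1 - cos x) := by
  have h : 1 + cos x ≠ 0 := by linarith
  rw [sin_sq, div_mul_eq_mul_div, div_eq_iff h]
  ring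

theorem spherical_euclidean_like_law_of_cosines_general
    (a b c A : ℝ)
    (ha : a ∈ Set.Ioo 0 π) (hb : b ∈ Set.Ioo 0 π) (hc : c ∈ Set.Ioo 0 π)
    (hA : cos a = cos b * cos c + sin b * sin c * cos A) :
    ((cos b + cos c) / (1 + cos a)) * (sin a) ^ 2 =
      ((cos c + cos a) / (1 + cos b)) * (sin b) ^ 2 +
      ((cos a + cos b) / (1 + cos c)) * (sin c) ^ 2 -
      2 * sin b * sin c * cos A := by
  simp only [div_one_add_cos_mul_sin_sq (neg_one_lt_cos_of_mem_Ioo ha),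
    div_one_add_cos_mul_sin_sq (neg_one_lt_cos_of_mem_Ioo hb),
    div_one_add_cos_mul_sin_sq (neg_one_lt_cos_of_mem_Ioo hc)]
  linear_combination (-2) * hA

theorem spherical_euclidean_like_law_of_cosines
    (a b c A B C : ℝ)
    (ha : a ∈ Set.Ioo 0 π) (hb : b ∈ Set.Ioo 0 π) (hc : c ∈ Set.Ioo 0 π)
    (hA : cos a = cos b * cos c + sin b * sin c * cos A)
    (hB : cos b = cos c * cos a + sin c * sin a * cos B)
    (hC : cos c = cos a * cos b + sin a * sin b * cos C) :
    ((cos b + cos c) / (1 + cos a)) * (sin a) ^ 2 =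
      ((cos c + cos a) / (1 + cos b)) * (sin b) ^ 2 +
      ((cos a + cos b) / (1 + cos c)) * (sin c) ^ 2 -
      2 * sin b * sin c * cos A :=
  spherical_euclidean_like_law_of_cosines_general a b c A ha hb hc hA
end

section
/- For a hyperbolic triangle with sides a, b, c and opposite angles A, B, C, the Euclidean-like law of cosines holds: ((cosh b + cosh c)/(1 + cosh a)) * (sinh a)^2 = ((cosh c + cosh a)/(1 + cosh b)) * (sinh b)^2 + ((cosh a + cosh b)/(1 + cosh c)) * (sinh c)^2 - 2 * sinh b * sinh c * cos A. -/
open Real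

theorem div_one_add_cosh_mul_sinh_sq (x y : ℝ) :
    y / (1 + cosh x) * sinh x ^ 2 = y * (cosh x - 1) := by
  have hpos : 0 < 1 + cosh x := by linarith [cosh_pos x]
  rw [sinh_sq]
  field_simp
  ring

theorem hyperbolic_euclidean_like_law_of_cosines_general
    (a b c A : ℝ)
    (hA : cosh a = cosh b * cosh c - sinh b * sinh c * cos A) :
    ((cosh b + cosh c) / (1 + cosh a)) * (sinh a) ^ 2 =
      ((cosh c + cosh a) / (1 + cosh b)) * (sinh b) ^ 2 +
      ((cosh a + cosh b) / (1 + cosh c)) * (sinh c) ^ 2 -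
      2 * sinh b * sinh c * cos A := by
  simp only [div_one_add_cosh_mul_sinh_sq]
  linear_combination 2 * hA

theorem hyperbolic_euclidean_like_law_of_cosines
    (a b c A B C : ℝ)
    (ha : 0 < a) (hb : 0 < b) (hc : 0 < c)
    (hA : cosh a = cosh b * cosh c - sinh b * sinh c * cos A)
    (hB : cosh b = cosh c * cosh a - sinh c * sinh a * cos B)
    (hC : cosh c = cosh a * cosh b - sinh a * sinh b * cos C) :
    ((cosh b + cosh c) / (1 + cosh a)) * (sinh a) ^ 2 =
      ((cosh c + cosh a) / (1 + cosh b)) * (sinh b) ^ 2 +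
      ((cosh a + cosh b) / (1 + cosh c)) * (sinh c) ^ 2 -
      2 * sinh b * sinh c * cos A :=
  hyperbolic_euclidean_like_law_of_cosines_general a b c A hA
end
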